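/- Decomposition of normal forms: if x, x̃ are k-dimensional trees in normal form with x ≗ x̃ and common cell dimension cd := cd(x) = cd(x̃), then x = (x₀ → u_{cd+1} → ⋯ → u_k) and x̃ = (x̃₀ → u_{cd+1} → ⋯ → u_k), where x₀ and x̃₀ are in normal form, contain no u-labelled vertices, and x₀ ≗ x̃₀. -/

import Mathlib

namespace Sesq

/-- `(𝒪ₙ, X)`-labelled trees: leaves labelled by cells of `X`, internal vertices
labelled by unit generators `u_i` or composition/whiskering generators `∘_{i,j}`. -/
inductive PTree (X : Type) : Type
  | leaf : X → PTree X
  | unit : ℕ → PTree X → PTree X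
  | comp : ℕ → ℕ → PTree X → PTree X → PTree X

namespace PTree

variable {X Y : Type}

/-- Dimension of a labelled tree. -/
def dimT (dX : X → ℕ) : PTree X → ℕ
  | leaf c => dX c
  | unit i _ => i
  | comp i j _ _ => max i j

/-- Well-formedness: labels have the appropriate dimensions. -/
def WF (dX : X → ℕ) : PTree X → Prop
  | leaf _ => True
  | unit i x => WF dX x ∧ dimT dX x + 1 = i
  | comp i j x y => WF dX x ∧ WF dX y ∧ dimT dX x = i ∧ dimT dX y = j ∧ 1 ≤ i ∧ 1 ≤ j

/-- Relabelling the leaves of a tree. -/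
def mapTree (f : X → Y) : PTree X → PTree Y
  | leaf c => leaf (f c)
  | unit i x => unit i (mapTree f x)
  | comp i j x y => comp i j (mapTree f x) (mapTree f y)

/-- A tree contains no `u`-labelled vertices. -/
def UnitFree : PTree X → Prop
  | leaf _ => True
  | unit _ _ => False
  | comp _ _ x y => UnitFree x ∧ UnitFree y

/-- The ordered list of leaves of a tree (increasing for the canonical linear order:
every leaf of the left subtree of `∘_{i,j}` is greater than every leaf of the right one). -/
def leaves : PTree X → List X
  | leaf c => [c]
  | unit _ x => leaves x
  | comp _ _ x y => leaves y ++ leaves x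

/-- The cell dimension `cd(x)`: the maximum of the dimensions of the cells labelling leaves. -/
def cdim (dX : X → ℕ) (x : PTree X) : ℕ :=
  ((leaves x).map dX).foldr max 0

/-- The leaves of dimension at least `M`, in the canonical order. -/
def leavesGe (dX : X → ℕ) (M : ℕ) (x : PTree X) : List X :=
  (leaves x).filter fun c => M ≤ dX c

/-- `M(x) = max { j : x has at least two leaves of dimension ≥ j }`, with `M(x) = ⊥ = -∞`
if `x` has only one leaf. -/
def Mval (dX : X → ℕ) (x : PTree X) : WithBot ℕ :=
  (((List.range (cdim dX x + 1)).filter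
      fun j => 2 ≤ ((leaves x).filter fun c => j ≤ dX c).length).map
      (fun j => (j : WithBot ℕ))).foldr max ⊥

/-- The set of values `m(v) = min i j` over `∘_{i,j}`-labelled internal vertices. -/
def mset : PTree X → Finset ℕ
  | leaf _ => ∅
  | unit _ x => mset x
  | comp i j x y => insert (min i j) (mset x ∪ mset y)

/-- `H(x)`, the number of distinct values of `m(v)` over internal `∘`-vertices of `x`. -/
def Hval (x : PTree X) : ℕ := (mset x).card

/-- The reduction `r(x)`, deleting unit-generated subtrees; `none` plays the role of `∅`. -/
def reduce : PTree X → Option (PTree X)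
  | leaf c => some (leaf c)
  | unit _ _ => none
  | comp i j x y =>
    if i = j then
      match reduce x, reduce y with
      | none, r => r
      | r, none => r
      | some a, some b => some (comp i j a b)
    else if i < j then
      match reduce x, reduce y with
      | none, r => r
      | _, none => none
      | some a, some b => some (comp i j a b)
    else
      match reduce x, reduce y with
      | r, none => r
      | none, _ => none
      | some a, some b => some (comp i j a b)

/-- The slice `σ^M_ℓ(w)`, where the leaf `ℓ ∈ L_{≥M}(w)` is specified by its index
`idx` in the ordered list `leavesGe dX M w`. -/
def slice (dX : X → ℕ) (M : ℕ) : PTree X → ℕ → PTree X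
  | leaf c, _ => leaf c
  | unit i x, _ => unit i x
  | comp i j x y, idx =>
    if M ≤ min i j then
      if idx < (leavesGe dX M y).length then slice dX M y idx
      else slice dX M x (idx - (leavesGe dX M y).length)
    else if i < j then
      comp i (dimT dX (slice dX M y idx)) x (slice dX M y idx)
    else
      comp (dimT dX (slice dX M x idx)) j (slice dX M x idx) y

/-- Grafting the chain of units `u_{a+1} → ⋯ → u_b` on top of `t`. -/
def graftUnits (t : PTree X) (a : ℕ) : ℕ → PTree X
  | 0 => t
  | b + 1 => if a < b + 1 then unit (b + 1) (graftUnits t a b) else t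

/-- The root of `t` is not a unit vertex. -/
def notUnitRoot (t : PTree X) : Prop := ∀ i y, t ≠ unit i y

/-- If the root of `t` is a `∘`-vertex, then its `m`-value is `< m`. -/
def smallRoot (m : ℕ) (t : PTree X) : Prop :=
  ∀ a b u v, t = comp a b u v → min a b < m

/-- The labelled-subtree relation: `IsSubtree s t` iff `s` is the full subtree of `t`
above some vertex. -/
inductive IsSubtree : PTree X → PTree X → Prop
  | refl (t) : IsSubtree t t
  | unit (i x s) : IsSubtree s x → IsSubtree s (PTree.unit i x)
  | left (i j x y s) : IsSubtree s x → IsSubtree s (PTree.comp i j x y)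
  | right (i j x y s) : IsSubtree s y → IsSubtree s (PTree.comp i j x y)

end PTree

/-- A precomputad: a set of cells with dimensions and source/target trees. -/
structure Precomputad where
  cells : Type
  dim : cells → ℕ
  csrc : cells → PTree cells
  ctgt : cells → PTree cells

namespace Precomputad

variable (P : Precomputad)

/-- The source map on labelled trees. -/
def srcT : PTree P.cells → PTree P.cells
  | .leaf c => P.csrc c
  | .unit _ x => x
  | .comp i j x y =>
    if i = j then srcT y
    else if i < j then .comp i (j - 1) x (srcT y)
    else .comp (i - 1) j (srcT x) y

/-- The target map on labelled trees. -/
def tgtT : PTree P.cells → PTree P.cells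
  | .leaf c => P.ctgt c
  | .unit _ x => x
  | .comp i j x y =>
    if i = j then tgtT y
    else if i < j then .comp i (j - 1) x (tgtT y)
    else .comp (i - 1) j (tgtT x) y

/-- Iterated source. -/
def srcIter (k : ℕ) : PTree P.cells → PTree P.cells := P.srcT^[k]

/-- Iterated target. -/
def tgtIter (k : ℕ) : PTree P.cells → PTree P.cells := P.tgtT^[k]

end Precomputad

open PTree

mutual

/-- `≗`-compatibility of labelled trees. -/
inductive Compat (P : Precomputad) : PTree P.cells → Prop
  | leaf (c) : Compat P (.leaf c)
  | unit {i : ℕ} {x} : Compat P x → dimT P.dim x + 1 = i → Compat P (.unit i x)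
  | comp {i j : ℕ} {x y} : Compat P x → Compat P y →
      dimT P.dim x = i → dimT P.dim y = j → 1 ≤ min i j →
      Rel P (P.srcIter (i - min i j + 1) x) (P.tgtIter (j - min i j + 1) y) →
      Compat P (.comp i j x y)

/-- The equivalence relation `≗` on compatible trees, generated by the relations `ℰₙ`
(units, associativity and congruence). -/
inductive Rel (P : Precomputad) : PTree P.cells → PTree P.cells → Prop
  | refl {x} : Compat P x → Rel P x x
  | symm {x y} : Rel P x y → Rel P y x
  | trans {x y z} : Rel P x y → Rel P y z → Rel P x z
  | congr_unit {k x x'} : Rel P x x' → Rel P (.unit k x) (.unit k x')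
  | congr_comp {i j x x' y y'} : Rel P x x' → Rel P y y' →
      Compat P (.comp i j x y) → Compat P (.comp i j x' y') →
      Rel P (.comp i j x y) (.comp i j x' y')
  | lam_unit {i k x y} : i ≤ k → Compat P x → Compat P y →
      dimT P.dim x + 1 = i → dimT P.dim y = k →
      Rel P x (P.tgtIter (k - i + 1) y) →
      Rel P (.comp i k (.unit i x) y) y
  | rho_unit {k i x y} : i ≤ k → Compat P x → Compat P y →
      dimT P.dim x = k → dimT P.dim y + 1 = i →
      Rel P (P.srcIter (k - i + 1) x) y →
      Rel P (.comp k i x (.unit i y)) x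
  | rho_push {i k x y} : i < k → Compat P x → Compat P y →
      dimT P.dim x = i → dimT P.dim y + 1 = k →
      Rel P (P.srcT x) (P.tgtIter (k - i) y) →
      Rel P (.comp i k x (.unit k y)) (.unit k (.comp i (k - 1) x y))
  | lam_push {k i x y} : i < k → Compat P x → Compat P y →
      dimT P.dim x + 1 = k → dimT P.dim y = i →
      Rel P (P.srcIter (k - i) x) (P.tgtT y) →
      Rel P (.comp k i (.unit k x) y) (.unit k (.comp (k - 1) i x y))
  | assoc_kkk {k x y z} : Compat P x → Compat P y → Compat P z →
      dimT P.dim x = k → dimT P.dim y = k → dimT P.dim z = k →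
      Rel P (P.srcT x) (P.tgtT y) → Rel P (P.srcT y) (P.tgtT z) →
      Rel P (.comp k k (.comp k k x y) z) (.comp k k x (.comp k k y z))
  | assoc_iik {i k x y z} : i < k → Compat P x → Compat P y → Compat P z →
      dimT P.dim x = i → dimT P.dim y = i → dimT P.dim z = k →
      Rel P (P.srcT x) (P.tgtT y) → Rel P (P.srcT y) (P.tgtIter (k - i + 1) z) →
      Rel P (.comp i k (.comp i i x y) z) (.comp i k x (.comp i k y z))
  | assoc_iki {i k x y z} : i < k → Compat P x → Compat P y → Compat P z →
      dimT P.dim x = i → dimT P.dim y = k → dimT P.dim z = i →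
      Rel P (P.srcT x) (P.tgtIter (k - i + 1) y) → Rel P (P.srcIter (k - i + 1) y) (P.tgtT z) →
      Rel P (.comp k i (.comp i k x y) z) (.comp i k x (.comp k i y z))
  | assoc_kii {i k x y z} : i < k → Compat P x → Compat P y → Compat P z →
      dimT P.dim x = k → dimT P.dim y = i → dimT P.dim z = i →
      Rel P (P.srcIter (k - i + 1) x) (P.tgtT y) → Rel P (P.srcT y) (P.tgtT z) →
      Rel P (.comp k i (.comp k i x y) z) (.comp k i x (.comp i i y z))
  | assoc_ikk {i k x y z} : i < k → Compat P x → Compat P y → Compat P z →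
      dimT P.dim x = i → dimT P.dim y = k → dimT P.dim z = k →
      Rel P (P.srcT x) (P.tgtIter (k - i + 1) y) → Rel P (P.srcT y) (P.tgtT z) →
      Rel P (.comp i k x (.comp k k y z)) (.comp k k (.comp i k x y) (.comp i k x z))
  | assoc_kki {i k x y z} : i < k → Compat P x → Compat P y → Compat P z →
      dimT P.dim x = k → dimT P.dim y = k → dimT P.dim z = i →
      Rel P (P.srcT x) (P.tgtT y) → Rel P (P.srcIter (k - i + 1) y) (P.tgtT z) →
      Rel P (.comp k i (.comp k k x y) z) (.comp k k (.comp k i x z) (.comp k i y z))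
  | assoc_ijk {i j k x y z} : i < j → j < k → Compat P x → Compat P y → Compat P z →
      dimT P.dim x = i → dimT P.dim y = j → dimT P.dim z = k →
      Rel P (P.srcT x) (P.tgtIter (j - i + 1) y) → Rel P (P.srcT y) (P.tgtIter (k - j + 1) z) →
      Rel P (.comp i k x (.comp j k y z)) (.comp j k (.comp i j x y) (.comp i k x z))
  | assoc_ikj {i j k x y z} : i < j → j < k → Compat P x → Compat P y → Compat P z →
      dimT P.dim x = i → dimT P.dim y = k → dimT P.dim z = j →
      Rel P (P.srcT x) (P.tgtIter (k - i + 1) y) → Rel P (P.srcIter (k - j + 1) y) (P.tgtT z) →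
      Rel P (.comp i k x (.comp k j y z)) (.comp k j (.comp i k x y) (.comp i j x z))
  | assoc_jki {i j k x y z} : i < j → j < k → Compat P x → Compat P y → Compat P z →
      dimT P.dim x = j → dimT P.dim y = k → dimT P.dim z = i →
      Rel P (P.srcT x) (P.tgtIter (k - j + 1) y) → Rel P (P.srcIter (k - i + 1) y) (P.tgtT z) →
      Rel P (.comp k i (.comp j k x y) z) (.comp j k (.comp j i x z) (.comp k i y z))
  | assoc_kji {i j k x y z} : i < j → j < k → Compat P x → Compat P y → Compat P z →
      dimT P.dim x = k → dimT P.dim y = j → dimT P.dim z = i →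
      Rel P (P.srcIter (k - j + 1) x) (P.tgtT y) → Rel P (P.srcIter (j - i + 1) y) (P.tgtT z) →
      Rel P (.comp k i (.comp k j x y) z) (.comp k j (.comp k i x z) (.comp j i y z))

end

mutual

/-- `≗°`-compatibility: compatibility with respect to the unit-free relations only. -/
inductive CompatO (P : Precomputad) : PTree P.cells → Prop
  | leaf (c) : CompatO P (.leaf c)
  | unit {i : ℕ} {x} : CompatO P x → dimT P.dim x + 1 = i → CompatO P (.unit i x)
  | comp {i j : ℕ} {x y} : CompatO P x → CompatO P y →
      dimT P.dim x = i → dimT P.dim y = j → 1 ≤ min i j →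
      RelO P (P.srcIter (i - min i j + 1) x) (P.tgtIter (j - min i j + 1) y) →
      CompatO P (.comp i j x y)

/-- The unit-free equivalence `≗°`, generated by the relations of `ℰₙ` not involving units. -/
inductive RelO (P : Precomputad) : PTree P.cells → PTree P.cells → Prop
  | refl {x} : CompatO P x → RelO P x x
  | symm {x y} : RelO P x y → RelO P y x
  | trans {x y z} : RelO P x y → RelO P y z → RelO P x z
  | congr_comp {i j x x' y y'} : RelO P x x' → RelO P y y' →
      CompatO P (.comp i j x y) → CompatO P (.comp i j x' y') →
      RelO P (.comp i j x y) (.comp i j x' y')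
  | assoc_kkk {k x y z} : CompatO P x → CompatO P y → CompatO P z →
      dimT P.dim x = k → dimT P.dim y = k → dimT P.dim z = k →
      RelO P (P.srcT x) (P.tgtT y) → RelO P (P.srcT y) (P.tgtT z) →
      RelO P (.comp k k (.comp k k x y) z) (.comp k k x (.comp k k y z))
  | assoc_iik {i k x y z} : i < k → CompatO P x → CompatO P y → CompatO P z →
      dimT P.dim x = i → dimT P.dim y = i → dimT P.dim z = k →
      RelO P (P.srcT x) (P.tgtT y) → RelO P (P.srcT y) (P.tgtIter (k - i + 1) z) →
      RelO P (.comp i k (.comp i i x y) z) (.comp i k x (.comp i k y z))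
  | assoc_iki {i k x y z} : i < k → CompatO P x → CompatO P y → CompatO P z →
      dimT P.dim x = i → dimT P.dim y = k → dimT P.dim z = i →
      RelO P (P.srcT x) (P.tgtIter (k - i + 1) y) → RelO P (P.srcIter (k - i + 1) y) (P.tgtT z) →
      RelO P (.comp k i (.comp i k x y) z) (.comp i k x (.comp k i y z))
  | assoc_kii {i k x y z} : i < k → CompatO P x → CompatO P y → CompatO P z →
      dimT P.dim x = k → dimT P.dim y = i → dimT P.dim z = i →
      RelO P (P.srcIter (k - i + 1) x) (P.tgtT y) → RelO P (P.srcT y) (P.tgtT z) →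
      RelO P (.comp k i (.comp k i x y) z) (.comp k i x (.comp i i y z))
  | assoc_ikk {i k x y z} : i < k → CompatO P x → CompatO P y → CompatO P z →
      dimT P.dim x = i → dimT P.dim y = k → dimT P.dim z = k →
      RelO P (P.srcT x) (P.tgtIter (k - i + 1) y) → RelO P (P.srcT y) (P.tgtT z) →
      RelO P (.comp i k x (.comp k k y z)) (.comp k k (.comp i k x y) (.comp i k x z))
  | assoc_kki {i k x y z} : i < k → CompatO P x → CompatO P y → CompatO P z →
      dimT P.dim x = k → dimT P.dim y = k → dimT P.dim z = i →
      RelO P (P.srcT x) (P.tgtT y) → RelO P (P.srcIter (k - i + 1) y) (P.tgtT z) →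
      RelO P (.comp k i (.comp k k x y) z) (.comp k k (.comp k i x z) (.comp k i y z))
  | assoc_ijk {i j k x y z} : i < j → j < k → CompatO P x → CompatO P y → CompatO P z →
      dimT P.dim x = i → dimT P.dim y = j → dimT P.dim z = k →
      RelO P (P.srcT x) (P.tgtIter (j - i + 1) y) → RelO P (P.srcT y) (P.tgtIter (k - j + 1) z) →
      RelO P (.comp i k x (.comp j k y z)) (.comp j k (.comp i j x y) (.comp i k x z))
  | assoc_ikj {i j k x y z} : i < j → j < k → CompatO P x → CompatO P y → CompatO P z →
      dimT P.dim x = i → dimT P.dim y = k → dimT P.dim z = j →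
      RelO P (P.srcT x) (P.tgtIter (k - i + 1) y) → RelO P (P.srcIter (k - j + 1) y) (P.tgtT z) →
      RelO P (.comp i k x (.comp k j y z)) (.comp k j (.comp i k x y) (.comp i j x z))
  | assoc_jki {i j k x y z} : i < j → j < k → CompatO P x → CompatO P y → CompatO P z →
      dimT P.dim x = j → dimT P.dim y = k → dimT P.dim z = i →
      RelO P (P.srcT x) (P.tgtIter (k - j + 1) y) → RelO P (P.srcIter (k - i + 1) y) (P.tgtT z) →
      RelO P (.comp k i (.comp j k x y) z) (.comp j k (.comp j i x z) (.comp k i y z))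
  | assoc_kji {i j k x y z} : i < j → j < k → CompatO P x → CompatO P y → CompatO P z →
      dimT P.dim x = k → dimT P.dim y = j → dimT P.dim z = i →
      RelO P (P.srcIter (k - j + 1) x) (P.tgtT y) → RelO P (P.srcIter (j - i + 1) y) (P.tgtT z) →
      RelO P (.comp k i (.comp k j x y) z) (.comp k j (.comp k i x z) (.comp j i y z))

end

mutual

/-- Trees in normal form: `m`-ordered, no edge `u → ∘`, and every `m`-constant
component in one of the two prescribed chain shapes. -/
inductive NF {X : Type} : PTree X → Prop
  | leaf (c : X) : NF (.leaf c)
  | unit (i : ℕ) (x : PTree X) : NF x → NF (.unit i x)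
  | compEq (k : ℕ) (x y : PTree X) : NF x → notUnitRoot x → smallRoot k x →
      ChainKK k y → NF (.comp k k x y)
  | compLt (i k : ℕ) (x y : PTree X) : i < k → NF x → notUnitRoot x → smallRoot i x →
      ChainA i k y → NF (.comp i k x y)
  | compGt (i k : ℕ) (x y : PTree X) : i < k → ChainB i k x → NF y → notUnitRoot y →
      smallRoot i y → NF (.comp k i x y)

/-- Continuation of an `m`-constant `∘_{k,k}`-chain in normal form. -/
inductive ChainKK {X : Type} : ℕ → PTree X → Prop
  | cons (k : ℕ) (x y : PTree X) : NF x → notUnitRoot x → smallRoot k x →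
      ChainKK k y → ChainKK k (.comp k k x y)
  | base (k : ℕ) (t : PTree X) : NF t → notUnitRoot t → smallRoot k t → ChainKK k t

/-- Continuation of the `∘_{i,k}`-phase of a mixed `m`-constant chain in normal form. -/
inductive ChainA {X : Type} : ℕ → ℕ → PTree X → Prop
  | cons (i k : ℕ) (x y : PTree X) : NF x → notUnitRoot x → smallRoot i x →
      ChainA i k y → ChainA i k (.comp i k x y)
  | toB (i k : ℕ) (t : PTree X) : ChainB i k t → ChainA i k t

/-- Continuation of the `∘_{k,i}`-phase of a mixed `m`-constant chain in normal form. -/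
inductive ChainB {X : Type} : ℕ → ℕ → PTree X → Prop
  | cons (i k : ℕ) (x y : PTree X) : ChainB i k x → NF y → notUnitRoot y →
      smallRoot i y → ChainB i k (.comp k i x y)
  | base (i k : ℕ) (t : PTree X) : NF t → notUnitRoot t → smallRoot i t → ChainB i k t

end

/-- A computad for the `n`-sesquicategory monad: cells of dimension `≤ n+1` with
compatible source/target trees satisfying the globularity relations up to `≗`. -/
structure Computad (n : ℕ) extends Precomputad where
  dim_le : ∀ c, dim c ≤ n + 1
  src_wf : ∀ c, 1 ≤ dim c → WF dim (csrc c)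
  tgt_wf : ∀ c, 1 ≤ dim c → WF dim (ctgt c)
  src_dim : ∀ c, 1 ≤ dim c → dimT dim (csrc c) + 1 = dim c
  tgt_dim : ∀ c, 1 ≤ dim c → dimT dim (ctgt c) + 1 = dim c
  src_compat : ∀ c, 1 ≤ dim c → Compat toPrecomputad (csrc c)
  tgt_compat : ∀ c, 1 ≤ dim c → Compat toPrecomputad (ctgt c)
  glob_s : ∀ c, 2 ≤ dim c →
    Rel toPrecomputad (toPrecomputad.srcT (csrc c)) (toPrecomputad.srcT (ctgt c))
  glob_t : ∀ c, 2 ≤ dim c →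
    Rel toPrecomputad (toPrecomputad.tgtT (csrc c)) (toPrecomputad.tgtT (ctgt c))

/-- A map of computads: a dimension-preserving map of cells commuting with
source and target up to `≗`. -/
structure CompHom {n : ℕ} (C D : Computad n) where
  f : C.cells → D.cells
  dim_eq : ∀ c, D.dim (f c) = C.dim c
  src_ok : ∀ c, 1 ≤ C.dim c →
    Rel D.toPrecomputad (D.csrc (f c)) (mapTree f (C.csrc c))
  tgt_ok : ∀ c, 1 ≤ C.dim c →
    Rel D.toPrecomputad (D.ctgt (f c)) (mapTree f (C.ctgt c))

end Sesq

/-!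
A normal form whose root is not a unit vertex is unit-free, so its dimension equals its cell
dimension; as `cd ≤ dim` for every compatible tree, a normal form is therefore a unit-free normal
form with exactly the units `u_{cd+1}, …, u_k` grafted on top. What remains is that units reflect
`≗`: `u(a) ≗ u(b)` implies `a ≗ b`. To see this, `idBase y` recognises the trees that are
syntactically an identity, the unit sitting at the end of the spine of top-dimensional arguments,
and returns the tree they are the identity on, which is then both their source and their target.
Every generating relation of `≗` preserves whether `idBase` is defined, and its value up to `≗`.
-/

theorem List.foldr_max_eq_max (l : List ℕ) (c : ℕ) :
    l.foldr max c = max (l.foldr max 0) c := by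
  induction l with
  | nil => simp
  | cons a l ih => simp only [List.foldr_cons, ih, Nat.max_assoc]

namespace Option

variable {α β γ δ : Type*}

theorem Rel.refl {r : α → α → Prop} [Std.Refl r] : ∀ o : Option α, Option.Rel r o o
  | Option.none => .none
  | Option.some a => .some (Std.Refl.refl a)

theorem Rel.symm {r : α → α → Prop} [Std.Symm r] {o o' : Option α} :
    Option.Rel r o o' → Option.Rel r o' o
  | .none => .none
  | .some h => .some (Std.Symm.symm _ _ h)

theorem Rel.trans {r : α → α → Prop} [IsTrans α r] {o o' o'' : Option α} :
    Option.Rel r o o' → Option.Rel r o' o'' → Option.Rel r o o''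
  | .none, .none => .none
  | .some h, .some h' => .some (_root_.trans h h')

theorem Rel.map {r : α → β → Prop} {s : γ → δ → Prop} {f : α → γ} {g : β → δ}
    {o : Option α} {o' : Option β} (h : Option.Rel r o o')
    (hfg : ∀ a ∈ o, ∀ b ∈ o', r a b → s (f a) (g b)) : Option.Rel s (o.map f) (o'.map g) := by
  cases h with
  | none => exact .none
  | some hab => exact .some (hfg _ rfl _ rfl hab)

theorem Rel.bind_const {r : α → β → Prop} {s : γ → δ → Prop} {o : Option α} {o' : Option β}
    {p : Option γ} {p' : Option δ} (h : Option.Rel r o o') (hp : Option.Rel s p p') :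
    Option.Rel s (o.bind fun _ => p) (o'.bind fun _ => p') := by
  cases h with
  | none => exact .none
  | some _ => exact hp

theorem rel_map_map {r : β → γ → Prop} {f : α → β} {g : α → γ} {o : Option α}
    (h : ∀ a ∈ o, r (f a) (g a)) : Option.Rel r (o.map f) (o.map g) := by
  cases o with
  | none => exact .none
  | some a => exact .some (h a rfl)

theorem rel_map_left {r : β → α → Prop} {f : α → β} {o : Option α}
    (h : ∀ a ∈ o, r (f a) a) : Option.Rel r (o.map f) o := by
  cases o with
  | none => exact .none
  | some a => exact .some (h a rfl)

end Option

namespace Sesq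

namespace PTree

variable {X : Type}

theorem graftUnits_of_le (t : PTree X) {a b : ℕ} (h : b ≤ a) : graftUnits t a b = t := by
  cases b with
  | zero => rfl
  | succ b => simp [graftUnits, Nat.not_lt.mpr h]

theorem graftUnits_succ (t : PTree X) {a b : ℕ} (h : a ≤ b) :
    graftUnits t a (b + 1) = unit (b + 1) (graftUnits t a b) := by
  simp [graftUnits, Nat.lt_succ_of_le h]

theorem cdim_comp (dX : X → ℕ) (i j : ℕ) (a b : PTree X) :
    cdim dX (comp i j a b) = max (cdim dX b) (cdim dX a) := by
  rw [cdim, leaves, List.map_append, List.foldr_append, List.foldr_max_eq_max]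
  rfl

@[simp] theorem cdim_unit (dX : X → ℕ) (i : ℕ) (a : PTree X) :
    cdim dX (unit i a) = cdim dX a := rfl

@[simp] theorem cdim_leaf (dX : X → ℕ) (c : X) : cdim dX (leaf c) = dX c := by
  simp [cdim, leaves]

def idBase : PTree X → Option (PTree X)
  | leaf _ => none
  | unit _ z => some z
  | comp i j u w =>
    if i = j then (idBase u).bind fun _ => idBase w
    else if i < j then (idBase w).map (comp i (j - 1) u)
    else (idBase u).map fun u₀ => comp (i - 1) j u₀ w

@[simp] theorem idBase_leaf (c : X) : idBase (leaf c) = none := rfl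

@[simp] theorem idBase_unit (i : ℕ) (z : PTree X) : idBase (unit i z) = some z := rfl

theorem idBase_comp_self (i : ℕ) (u w : PTree X) :
    idBase (comp i i u w) = (idBase u).bind fun _ => idBase w := by
  simp [idBase]

theorem idBase_comp_of_lt {i j : ℕ} (h : i < j) (u w : PTree X) :
    idBase (comp i j u w) = (idBase w).map (comp i (j - 1) u) := by
  simp [idBase, h, h.ne]

theorem idBase_comp_of_gt {i j : ℕ} (h : j < i) (u w : PTree X) :
    idBase (comp i j u w) = (idBase u).map fun u₀ => comp (i - 1) j u₀ w := by
  simp [idBase, h.ne', h.not_gt]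

end PTree

open PTree Relation

theorem NF.unitFree {X : Type} {t : PTree X} (h : NF t) (hr : notUnitRoot t) : UnitFree t :=
  NF.rec (motive_1 := fun t _ => notUnitRoot t → UnitFree t)
    (motive_2 := fun _ t _ => UnitFree t) (motive_3 := fun _ _ t _ => UnitFree t)
    (motive_4 := fun _ _ t _ => UnitFree t)
    (fun _ _ => trivial)
    (fun i x _ _ hr => hr i x rfl)
    (fun _ _ _ _ hx _ _ ihx ihy _ => ⟨ihx hx, ihy⟩)
    (fun _ _ _ _ _ _ hx _ _ ihx ihy _ => ⟨ihx hx, ihy⟩)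
    (fun _ _ _ _ _ _ _ hy _ ihx ihy _ => ⟨ihx, ihy hy⟩)
    (fun _ _ _ _ hx _ _ ihx ihy => ⟨ihx hx, ihy⟩)
    (fun _ _ _ ht _ iht => iht ht)
    (fun _ _ _ _ _ hx _ _ ihx ihy => ⟨ihx hx, ihy⟩)
    (fun _ _ _ _ ih => ih)
    (fun _ _ _ _ _ _ hy _ ihx ihy => ⟨ihx, ihy hy⟩)
    (fun _ _ _ _ ht _ iht => iht ht)
    h hr

variable {P : Precomputad} {i j k : ℕ} {x y z x' y' : PTree P.cells}

theorem Compat.of_unit {a : PTree P.cells} (h : Compat P (.unit i a)) :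
    Compat P a ∧ dimT P.dim a + 1 = i := by
  cases h with
  | unit ha hd => exact ⟨ha, hd⟩

theorem Compat.of_comp {a b : PTree P.cells} (h : Compat P (.comp i j a b)) :
    Compat P a ∧ Compat P b ∧ dimT P.dim a = i ∧ dimT P.dim b = j ∧ 1 ≤ min i j ∧
      Rel P (P.srcIter (i - min i j + 1) a) (P.tgtIter (j - min i j + 1) b) := by
  cases h with
  | comp ha hb hda hdb hm hr => exact ⟨ha, hb, hda, hdb, hm, hr⟩

theorem Compat.cdim_le_dimT (h : Compat P x) :
    cdim P.dim x ≤ dimT P.dim x := by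
  induction x with
  | leaf c => simp [dimT]
  | unit i a ih =>
    obtain ⟨ha, hd⟩ := h.of_unit
    have := ih ha
    simp only [cdim_unit, dimT]
    omega
  | comp i j a b iha ihb =>
    obtain ⟨ha, hb, hda, hdb, -⟩ := h.of_comp
    have := iha ha
    have := ihb hb
    simp only [cdim_comp, dimT]
    omega

theorem Compat.dimT_eq_cdim (h : Compat P x) (hu : UnitFree x) :
    dimT P.dim x = cdim P.dim x := by
  induction x with
  | leaf c => simp [dimT]
  | unit i a ih => exact hu.elim
  | comp i j a b iha ihb =>
    obtain ⟨ha, hb, hda, hdb, -⟩ := h.of_comp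
    have := iha ha hu.1
    have := ihb hb hu.2
    simp only [cdim_comp, dimT]
    omega

theorem NF.exists_graftUnits (hn : NF x) (hc : Compat P x) :
    ∃ x₀, x = graftUnits x₀ (cdim P.dim x) (dimT P.dim x) ∧ NF x₀ ∧ UnitFree x₀ := by
  induction x with
  | unit i a ih =>
    cases hn with | unit _ _ hn =>
    obtain ⟨ha, rfl⟩ := hc.of_unit
    obtain ⟨a₀, ha₀, hn₀, hu₀⟩ := ih hn ha
    refine ⟨a₀, ?_, hn₀, hu₀⟩
    rw [cdim_unit, dimT, graftUnits_succ _ ha.cdim_le_dimT, ← ha₀]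
  | leaf | comp =>
    have hu := hn.unitFree (by intro _ _ h; cases h)
    exact ⟨_, (graftUnits_of_le _ (hc.dimT_eq_cdim hu).le).symm, hn, hu⟩

theorem srcT_eq_of_idBase {y₀ : PTree P.cells} (h : idBase y = some y₀) : P.srcT y = y₀ := by
  induction y generalizing y₀ with
  | leaf c => simp at h
  | unit i z => simpa [Precomputad.srcT] using h
  | comp i j u w ihu ihw =>
    rcases lt_trichotomy i j with hij | rfl | hij
    · obtain ⟨w₀, hw, rfl⟩ := Option.map_eq_some_iff.mp (idBase_comp_of_lt hij u w ▸ h)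
      simp [Precomputad.srcT, hij, hij.ne, ihw hw]
    · obtain ⟨-, -, hw⟩ := Option.bind_eq_some_iff.mp (idBase_comp_self i u w ▸ h)
      simp [Precomputad.srcT, ihw hw]
    · obtain ⟨u₀, hu, rfl⟩ := Option.map_eq_some_iff.mp (idBase_comp_of_gt hij u w ▸ h)
      simp [Precomputad.srcT, hij.ne', hij.not_gt, ihu hu]

theorem tgtT_eq_of_idBase {y₀ : PTree P.cells} (h : idBase y = some y₀) : P.tgtT y = y₀ := by
  induction y generalizing y₀ with
  | leaf c => simp at h
  | unit i z => simpa [Precomputad.tgtT] using h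
  | comp i j u w ihu ihw =>
    rcases lt_trichotomy i j with hij | rfl | hij
    · obtain ⟨w₀, hw, rfl⟩ := Option.map_eq_some_iff.mp (idBase_comp_of_lt hij u w ▸ h)
      simp [Precomputad.tgtT, hij, hij.ne, ihw hw]
    · obtain ⟨-, -, hw⟩ := Option.bind_eq_some_iff.mp (idBase_comp_self i u w ▸ h)
      simp [Precomputad.tgtT, ihw hw]
    · obtain ⟨u₀, hu, rfl⟩ := Option.map_eq_some_iff.mp (idBase_comp_of_gt hij u w ▸ h)
      simp [Precomputad.tgtT, hij.ne', hij.not_gt, ihu hu]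

theorem srcIter_of_idBase {y₀ : PTree P.cells} (h : idBase y = some y₀) {q q' : ℕ}
    (hq : q = q' + 1) : P.srcIter q y = P.srcIter q' y₀ := by
  rw [hq, Precomputad.srcIter, Function.iterate_succ_apply, srcT_eq_of_idBase h]
  rfl

theorem tgtIter_of_idBase {y₀ : PTree P.cells} (h : idBase y = some y₀) {q q' : ℕ}
    (hq : q = q' + 1) : P.tgtIter q y = P.tgtIter q' y₀ := by
  rw [hq, Precomputad.tgtIter, Function.iterate_succ_apply, tgtT_eq_of_idBase h]
  rfl

theorem Compat.idBase {y₀ : PTree P.cells} (hc : Compat P y) (h : idBase y = some y₀) :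
    Compat P y₀ ∧ dimT P.dim y₀ + 1 = dimT P.dim y := by
  induction y generalizing y₀ with
  | leaf c => simp at h
  | unit i z => cases h; exact hc.of_unit
  | comp i j u w ihu ihw =>
    obtain ⟨hu, hw, hdu, hdw, hm, hr⟩ := hc.of_comp
    rcases lt_trichotomy i j with hij | rfl | hij
    · obtain ⟨w₀, hw₀, rfl⟩ := Option.map_eq_some_iff.mp (idBase_comp_of_lt hij u w ▸ h)
      obtain ⟨hcw₀, hdw₀⟩ := ihw hw hw₀
      rw [tgtIter_of_idBase hw₀ (by omega : j - min i j + 1 = j - 1 - min i (j - 1) + 1 + 1),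
        show i - min i j = i - min i (j - 1) by omega] at hr
      exact ⟨.comp hu hcw₀ hdu (by omega) (by omega) hr, show max _ _ + 1 = max _ _ by omega⟩
    · obtain ⟨-, -, hw₀⟩ := Option.bind_eq_some_iff.mp (idBase_comp_self i u w ▸ h)
      obtain ⟨hcw₀, hdw₀⟩ := ihw hw hw₀
      exact ⟨hcw₀, show _ = max i i by omega⟩
    · obtain ⟨u₀, hu₀, rfl⟩ := Option.map_eq_some_iff.mp (idBase_comp_of_gt hij u w ▸ h)
      obtain ⟨hcu₀, hdu₀⟩ := ihu hu hu₀
      rw [srcIter_of_idBase hu₀ (by omega : i - min i j + 1 = i - 1 - min (i - 1) j + 1 + 1),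
        show j - min i j = j - min (i - 1) j by omega] at hr
      exact ⟨.comp hcu₀ hw (by omega) hdw (by omega) hr, show max _ _ + 1 = max _ _ by omega⟩

instance : Std.Symm (Rel P) := ⟨fun _ _ => Rel.symm⟩

instance : IsTrans (PTree P.cells) (Rel P) := ⟨fun _ _ _ => Rel.trans⟩

theorem Rel.of_reflGen (h : ReflGen (Rel P) x y) (hx : Compat P x) : Rel P x y := by
  cases h with
  | refl => exact .refl hx
  | single h => exact h

-- Removing a unit lowers the top dimension `k` by one, possibly to the middle index, where
-- these associativities degenerate to `assoc_kkk`, `assoc_ikk` or `assoc_kki`.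
theorem Rel.assoc_iik_le (hik : i ≤ k) (hx : Compat P x) (hy : Compat P y) (hz : Compat P z)
    (hdx : dimT P.dim x = i) (hdy : dimT P.dim y = i) (hdz : dimT P.dim z = k)
    (h₁ : Rel P (P.srcT x) (P.tgtT y)) (h₂ : Rel P (P.srcT y) (P.tgtIter (k - i + 1) z)) :
    Rel P (.comp i k (.comp i i x y) z) (.comp i k x (.comp i k y z)) := by
  obtain hik | rfl := hik.lt_or_eq
  · exact .assoc_iik hik hx hy hz hdx hdy hdz h₁ h₂
  · rw [Nat.sub_self] at h₂
    exact .assoc_kkk hx hy hz hdx hdy hdz h₁ h₂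

theorem Rel.assoc_iki_le (hik : i ≤ k) (hx : Compat P x) (hy : Compat P y) (hz : Compat P z)
    (hdx : dimT P.dim x = i) (hdy : dimT P.dim y = k) (hdz : dimT P.dim z = i)
    (h₁ : Rel P (P.srcT x) (P.tgtIter (k - i + 1) y))
    (h₂ : Rel P (P.srcIter (k - i + 1) y) (P.tgtT z)) :
    Rel P (.comp k i (.comp i k x y) z) (.comp i k x (.comp k i y z)) := by
  obtain hik | rfl := hik.lt_or_eq
  · exact .assoc_iki hik hx hy hz hdx hdy hdz h₁ h₂
  · rw [Nat.sub_self] at h₁ h₂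
    exact .assoc_kkk hx hy hz hdx hdy hdz h₁ h₂

theorem Rel.assoc_kii_le (hik : i ≤ k) (hx : Compat P x) (hy : Compat P y) (hz : Compat P z)
    (hdx : dimT P.dim x = k) (hdy : dimT P.dim y = i) (hdz : dimT P.dim z = i)
    (h₁ : Rel P (P.srcIter (k - i + 1) x) (P.tgtT y)) (h₂ : Rel P (P.srcT y) (P.tgtT z)) :
    Rel P (.comp k i (.comp k i x y) z) (.comp k i x (.comp i i y z)) := by
  obtain hik | rfl := hik.lt_or_eq
  · exact .assoc_kii hik hx hy hz hdx hdy hdz h₁ h₂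
  · rw [Nat.sub_self] at h₁
    exact .assoc_kkk hx hy hz hdx hdy hdz h₁ h₂

theorem Rel.assoc_ijk_le (hij : i < j) (hjk : j ≤ k) (hx : Compat P x) (hy : Compat P y)
    (hz : Compat P z) (hdx : dimT P.dim x = i) (hdy : dimT P.dim y = j) (hdz : dimT P.dim z = k)
    (h₁ : Rel P (P.srcT x) (P.tgtIter (j - i + 1) y))
    (h₂ : Rel P (P.srcT y) (P.tgtIter (k - j + 1) z)) :
    Rel P (.comp i k x (.comp j k y z)) (.comp j k (.comp i j x y) (.comp i k x z)) := by
  obtain hjk | rfl := hjk.lt_or_eq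
  · exact .assoc_ijk hij hjk hx hy hz hdx hdy hdz h₁ h₂
  · rw [Nat.sub_self] at h₂
    exact .assoc_ikk hij hx hy hz hdx hdy hdz h₁ h₂

theorem Rel.assoc_ikj_le (hij : i < j) (hjk : j ≤ k) (hx : Compat P x) (hy : Compat P y)
    (hz : Compat P z) (hdx : dimT P.dim x = i) (hdy : dimT P.dim y = k) (hdz : dimT P.dim z = j)
    (h₁ : Rel P (P.srcT x) (P.tgtIter (k - i + 1) y))
    (h₂ : Rel P (P.srcIter (k - j + 1) y) (P.tgtT z)) :
    Rel P (.comp i k x (.comp k j y z)) (.comp k j (.comp i k x y) (.comp i j x z)) := by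
  obtain hjk | rfl := hjk.lt_or_eq
  · exact .assoc_ikj hij hjk hx hy hz hdx hdy hdz h₁ h₂
  · rw [Nat.sub_self] at h₂
    exact .assoc_ikk hij hx hy hz hdx hdy hdz h₁ h₂

theorem Rel.assoc_jki_le (hij : i < j) (hjk : j ≤ k) (hx : Compat P x) (hy : Compat P y)
    (hz : Compat P z) (hdx : dimT P.dim x = j) (hdy : dimT P.dim y = k) (hdz : dimT P.dim z = i)
    (h₁ : Rel P (P.srcT x) (P.tgtIter (k - j + 1) y))
    (h₂ : Rel P (P.srcIter (k - i + 1) y) (P.tgtT z)) :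
    Rel P (.comp k i (.comp j k x y) z) (.comp j k (.comp j i x z) (.comp k i y z)) := by
  obtain hjk | rfl := hjk.lt_or_eq
  · exact .assoc_jki hij hjk hx hy hz hdx hdy hdz h₁ h₂
  · rw [Nat.sub_self] at h₁
    exact .assoc_kki hij hx hy hz hdx hdy hdz h₁ h₂

theorem Rel.assoc_kji_le (hij : i < j) (hjk : j ≤ k) (hx : Compat P x) (hy : Compat P y)
    (hz : Compat P z) (hdx : dimT P.dim x = k) (hdy : dimT P.dim y = j) (hdz : dimT P.dim z = i)
    (h₁ : Rel P (P.srcIter (k - j + 1) x) (P.tgtT y))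
    (h₂ : Rel P (P.srcIter (j - i + 1) y) (P.tgtT z)) :
    Rel P (.comp k i (.comp k j x y) z) (.comp k j (.comp k i x z) (.comp j i y z)) := by
  obtain hjk | rfl := hjk.lt_or_eq
  · exact .assoc_kji hij hjk hx hy hz hdx hdy hdz h₁ h₂
  · rw [Nat.sub_self] at h₁
    exact .assoc_kki hij hx hy hz hdx hdy hdz h₁ h₂

-- Reflexive closure, since `Rel` is reflexive only on compatible trees.
def IdBaseRel (P : Precomputad) (z z' : PTree P.cells) : Prop :=
  Option.Rel (ReflGen (Rel P)) (idBase z) (idBase z')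

namespace IdBaseRel

theorem of_idBase_eq (h : idBase z = idBase z') : IdBaseRel P z z' := by
  rw [IdBaseRel, h]
  exact .refl _

theorem congr_comp (hxr : IdBaseRel P x x') (hyr : IdBaseRel P y y') (hx : Rel P x x')
    (hy : Rel P y y') (hc : Compat P (.comp i j x y)) (hc' : Compat P (.comp i j x' y')) :
    IdBaseRel P (.comp i j x y) (.comp i j x' y') := by
  rcases lt_trichotomy i j with hij | rfl | hij
  · rw [IdBaseRel, idBase_comp_of_lt hij, idBase_comp_of_lt hij]
    refine hyr.map fun y₀ hy₀ y₀' hy₀' hr => .single ?_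
    have hc₀ := (hc.idBase (by rw [idBase_comp_of_lt hij, hy₀]; rfl)).1
    have hc₀' := (hc'.idBase (by rw [idBase_comp_of_lt hij, hy₀']; rfl)).1
    exact .congr_comp hx (Rel.of_reflGen hr hc₀.of_comp.2.1) hc₀ hc₀'
  · rw [IdBaseRel, idBase_comp_self, idBase_comp_self]
    exact hxr.bind_const hyr
  · rw [IdBaseRel, idBase_comp_of_gt hij, idBase_comp_of_gt hij]
    refine hxr.map fun x₀ hx₀ x₀' hx₀' hr => .single ?_
    have hc₀ := (hc.idBase (by rw [idBase_comp_of_gt hij, hx₀]; rfl)).1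
    have hc₀' := (hc'.idBase (by rw [idBase_comp_of_gt hij, hx₀']; rfl)).1
    exact .congr_comp (Rel.of_reflGen hr hc₀.of_comp.1) hy hc₀ hc₀'

theorem lam_unit (hik : i ≤ k) (hx : Compat P x) (hy : Compat P y) (hdx : dimT P.dim x + 1 = i)
    (hdy : dimT P.dim y = k) (h : Rel P x (P.tgtIter (k - i + 1) y)) :
    IdBaseRel P (.comp i k (.unit i x) y) y := by
  obtain hik | rfl := hik.lt_or_eq
  · rw [IdBaseRel, idBase_comp_of_lt hik]
    refine Option.rel_map_left fun y₀ hy₀ => .single ?_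
    obtain ⟨hcy₀, hdy₀⟩ := hy.idBase hy₀
    rw [tgtIter_of_idBase hy₀ (by omega : k - i + 1 = k - 1 - i + 1 + 1)] at h
    exact .lam_unit (by omega) hx hcy₀ hdx (by omega) h
  · exact of_idBase_eq (by simp [idBase_comp_self])

theorem rho_unit (hik : i ≤ k) (hx : Compat P x) (hy : Compat P y) (hdx : dimT P.dim x = k)
    (hdy : dimT P.dim y + 1 = i) (h : Rel P (P.srcIter (k - i + 1) x) y) :
    IdBaseRel P (.comp k i x (.unit i y)) x := by
  obtain hik | rfl := hik.lt_or_eq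
  · rw [IdBaseRel, idBase_comp_of_gt hik]
    refine Option.rel_map_left fun x₀ hx₀ => .single ?_
    obtain ⟨hcx₀, hdx₀⟩ := hx.idBase hx₀
    rw [srcIter_of_idBase hx₀ (by omega : k - i + 1 = k - 1 - i + 1 + 1)] at h
    exact .rho_unit (by omega) hcx₀ hy (by omega) hdy h
  · rw [IdBaseRel, idBase_comp_self]
    rcases hx₀ : idBase x with _ | x₀
    · exact .none
    · rw [srcIter_of_idBase hx₀ (by omega : i - i + 1 = 0 + 1)] at h
      exact .some (.single (Rel.symm h))

theorem rho_push (hik : i < k) :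
    IdBaseRel P (.comp i k x (.unit k y)) (.unit k (.comp i (k - 1) x y)) :=
  of_idBase_eq (by simp [idBase_comp_of_lt hik])

theorem lam_push (hik : i < k) :
    IdBaseRel P (.comp k i (.unit k x) y) (.unit k (.comp (k - 1) i x y)) :=
  of_idBase_eq (by simp [idBase_comp_of_gt hik])

theorem assoc_kkk : IdBaseRel P (.comp k k (.comp k k x y) z) (.comp k k x (.comp k k y z)) :=
  of_idBase_eq (by simp only [idBase_comp_self, Option.bind_assoc])

theorem assoc_ikk (hik : i < k) :
    IdBaseRel P (.comp i k x (.comp k k y z)) (.comp k k (.comp i k x y) (.comp i k x z)) :=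
  of_idBase_eq (by simp [idBase_comp_self, idBase_comp_of_lt hik, Option.bind_map, Option.map_bind])

theorem assoc_kki (hik : i < k) :
    IdBaseRel P (.comp k i (.comp k k x y) z) (.comp k k (.comp k i x z) (.comp k i y z)) :=
  of_idBase_eq (by simp [idBase_comp_self, idBase_comp_of_gt hik, Option.bind_map, Option.map_bind])

theorem assoc_iik (hik : i < k) (hx : Compat P x) (hy : Compat P y) (hz : Compat P z)
    (hdx : dimT P.dim x = i) (hdy : dimT P.dim y = i) (hdz : dimT P.dim z = k)
    (h₁ : Rel P (P.srcT x) (P.tgtT y)) (h₂ : Rel P (P.srcT y) (P.tgtIter (k - i + 1) z)) :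
    IdBaseRel P (.comp i k (.comp i i x y) z) (.comp i k x (.comp i k y z)) := by
  rw [IdBaseRel, idBase_comp_of_lt hik, idBase_comp_of_lt hik, idBase_comp_of_lt hik,
    Option.map_map]
  refine Option.rel_map_map fun z₀ hz₀ => .single ?_
  obtain ⟨hcz₀, hdz₀⟩ := hz.idBase hz₀
  rw [tgtIter_of_idBase hz₀ (by omega : k - i + 1 = k - 1 - i + 1 + 1)] at h₂
  exact Rel.assoc_iik_le (by omega) hx hy hcz₀ hdx hdy (by omega) h₁ h₂

theorem assoc_iki (hik : i < k) (hx : Compat P x) (hy : Compat P y) (hz : Compat P z)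
    (hdx : dimT P.dim x = i) (hdy : dimT P.dim y = k) (hdz : dimT P.dim z = i)
    (h₁ : Rel P (P.srcT x) (P.tgtIter (k - i + 1) y))
    (h₂ : Rel P (P.srcIter (k - i + 1) y) (P.tgtT z)) :
    IdBaseRel P (.comp k i (.comp i k x y) z) (.comp i k x (.comp k i y z)) := by
  rw [IdBaseRel, idBase_comp_of_gt hik, idBase_comp_of_lt hik, idBase_comp_of_lt hik,
    idBase_comp_of_gt hik, Option.map_map, Option.map_map]
  refine Option.rel_map_map fun y₀ hy₀ => .single ?_
  obtain ⟨hcy₀, hdy₀⟩ := hy.idBase hy₀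
  rw [tgtIter_of_idBase hy₀ (by omega : k - i + 1 = k - 1 - i + 1 + 1)] at h₁
  rw [srcIter_of_idBase hy₀ (by omega : k - i + 1 = k - 1 - i + 1 + 1)] at h₂
  exact Rel.assoc_iki_le (by omega) hx hcy₀ hz hdx (by omega) hdz h₁ h₂

theorem assoc_kii (hik : i < k) (hx : Compat P x) (hy : Compat P y) (hz : Compat P z)
    (hdx : dimT P.dim x = k) (hdy : dimT P.dim y = i) (hdz : dimT P.dim z = i)
    (h₁ : Rel P (P.srcIter (k - i + 1) x) (P.tgtT y)) (h₂ : Rel P (P.srcT y) (P.tgtT z)) :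
    IdBaseRel P (.comp k i (.comp k i x y) z) (.comp k i x (.comp i i y z)) := by
  rw [IdBaseRel, idBase_comp_of_gt hik, idBase_comp_of_gt hik, idBase_comp_of_gt hik,
    Option.map_map]
  refine Option.rel_map_map fun x₀ hx₀ => .single ?_
  obtain ⟨hcx₀, hdx₀⟩ := hx.idBase hx₀
  rw [srcIter_of_idBase hx₀ (by omega : k - i + 1 = k - 1 - i + 1 + 1)] at h₁
  exact Rel.assoc_kii_le (by omega) hcx₀ hy hz (by omega) hdy hdz h₁ h₂

theorem assoc_ijk (hij : i < j) (hjk : j < k) (hx : Compat P x) (hy : Compat P y)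
    (hz : Compat P z) (hdx : dimT P.dim x = i) (hdy : dimT P.dim y = j) (hdz : dimT P.dim z = k)
    (h₁ : Rel P (P.srcT x) (P.tgtIter (j - i + 1) y))
    (h₂ : Rel P (P.srcT y) (P.tgtIter (k - j + 1) z)) :
    IdBaseRel P (.comp i k x (.comp j k y z)) (.comp j k (.comp i j x y) (.comp i k x z)) := by
  rw [IdBaseRel, idBase_comp_of_lt (hij.trans hjk), idBase_comp_of_lt hjk, idBase_comp_of_lt hjk,
    idBase_comp_of_lt (hij.trans hjk), Option.map_map, Option.map_map]
  refine Option.rel_map_map fun z₀ hz₀ => .single ?_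
  obtain ⟨hcz₀, hdz₀⟩ := hz.idBase hz₀
  rw [tgtIter_of_idBase hz₀ (by omega : k - j + 1 = k - 1 - j + 1 + 1)] at h₂
  exact Rel.assoc_ijk_le hij (by omega) hx hy hcz₀ hdx hdy (by omega) h₁ h₂

theorem assoc_ikj (hij : i < j) (hjk : j < k) (hx : Compat P x) (hy : Compat P y)
    (hz : Compat P z) (hdx : dimT P.dim x = i) (hdy : dimT P.dim y = k) (hdz : dimT P.dim z = j)
    (h₁ : Rel P (P.srcT x) (P.tgtIter (k - i + 1) y))
    (h₂ : Rel P (P.srcIter (k - j + 1) y) (P.tgtT z)) :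
    IdBaseRel P (.comp i k x (.comp k j y z)) (.comp k j (.comp i k x y) (.comp i j x z)) := by
  rw [IdBaseRel, idBase_comp_of_lt (hij.trans hjk), idBase_comp_of_gt hjk, idBase_comp_of_gt hjk,
    idBase_comp_of_lt (hij.trans hjk), Option.map_map, Option.map_map]
  refine Option.rel_map_map fun y₀ hy₀ => .single ?_
  obtain ⟨hcy₀, hdy₀⟩ := hy.idBase hy₀
  rw [tgtIter_of_idBase hy₀ (by omega : k - i + 1 = k - 1 - i + 1 + 1)] at h₁
  rw [srcIter_of_idBase hy₀ (by omega : k - j + 1 = k - 1 - j + 1 + 1)] at h₂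
  exact Rel.assoc_ikj_le hij (by omega) hx hcy₀ hz hdx (by omega) hdz h₁ h₂

theorem assoc_jki (hij : i < j) (hjk : j < k) (hx : Compat P x) (hy : Compat P y)
    (hz : Compat P z) (hdx : dimT P.dim x = j) (hdy : dimT P.dim y = k) (hdz : dimT P.dim z = i)
    (h₁ : Rel P (P.srcT x) (P.tgtIter (k - j + 1) y))
    (h₂ : Rel P (P.srcIter (k - i + 1) y) (P.tgtT z)) :
    IdBaseRel P (.comp k i (.comp j k x y) z) (.comp j k (.comp j i x z) (.comp k i y z)) := by
  rw [IdBaseRel, idBase_comp_of_gt (hij.trans hjk), idBase_comp_of_lt hjk, idBase_comp_of_lt hjk,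
    idBase_comp_of_gt (hij.trans hjk), Option.map_map, Option.map_map]
  refine Option.rel_map_map fun y₀ hy₀ => .single ?_
  obtain ⟨hcy₀, hdy₀⟩ := hy.idBase hy₀
  rw [tgtIter_of_idBase hy₀ (by omega : k - j + 1 = k - 1 - j + 1 + 1)] at h₁
  rw [srcIter_of_idBase hy₀ (by omega : k - i + 1 = k - 1 - i + 1 + 1)] at h₂
  exact Rel.assoc_jki_le hij (by omega) hx hcy₀ hz hdx (by omega) hdz h₁ h₂

theorem assoc_kji (hij : i < j) (hjk : j < k) (hx : Compat P x) (hy : Compat P y)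
    (hz : Compat P z) (hdx : dimT P.dim x = k) (hdy : dimT P.dim y = j) (hdz : dimT P.dim z = i)
    (h₁ : Rel P (P.srcIter (k - j + 1) x) (P.tgtT y))
    (h₂ : Rel P (P.srcIter (j - i + 1) y) (P.tgtT z)) :
    IdBaseRel P (.comp k i (.comp k j x y) z) (.comp k j (.comp k i x z) (.comp j i y z)) := by
  rw [IdBaseRel, idBase_comp_of_gt (hij.trans hjk), idBase_comp_of_gt hjk, idBase_comp_of_gt hjk,
    idBase_comp_of_gt (hij.trans hjk), Option.map_map, Option.map_map]
  refine Option.rel_map_map fun x₀ hx₀ => .single ?_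
  obtain ⟨hcx₀, hdx₀⟩ := hx.idBase hx₀
  rw [srcIter_of_idBase hx₀ (by omega : k - j + 1 = k - 1 - j + 1 + 1)] at h₁
  exact Rel.assoc_kji_le hij (by omega) hcx₀ hy hz (by omega) hdy hdz h₁ h₂

end IdBaseRel

theorem Rel.idBaseRel : ∀ {z z' : PTree P.cells}, Rel P z z' → IdBaseRel P z z'
  | _, _, .refl _ => .refl _
  | _, _, .symm h => h.idBaseRel.symm
  | _, _, .trans h h' => h.idBaseRel.trans h'.idBaseRel
  | _, _, .congr_unit h => .some (.single h)
  | _, _, .congr_comp hx hy hc hc' => .congr_comp hx.idBaseRel hy.idBaseRel hx hy hc hc'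
  | _, _, .lam_unit hik hx hy hdx hdy h => .lam_unit hik hx hy hdx hdy h
  | _, _, .rho_unit hik hx hy hdx hdy h => .rho_unit hik hx hy hdx hdy h
  | _, _, .rho_push hik .. => .rho_push hik
  | _, _, .lam_push hik .. => .lam_push hik
  | _, _, .assoc_kkk .. => .assoc_kkk
  | _, _, .assoc_iik hik hx hy hz hdx hdy hdz h₁ h₂ => .assoc_iik hik hx hy hz hdx hdy hdz h₁ h₂
  | _, _, .assoc_iki hik hx hy hz hdx hdy hdz h₁ h₂ => .assoc_iki hik hx hy hz hdx hdy hdz h₁ h₂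
  | _, _, .assoc_kii hik hx hy hz hdx hdy hdz h₁ h₂ => .assoc_kii hik hx hy hz hdx hdy hdz h₁ h₂
  | _, _, .assoc_ikk hik .. => .assoc_ikk hik
  | _, _, .assoc_kki hik .. => .assoc_kki hik
  | _, _, .assoc_ijk hij hjk hx hy hz hdx hdy hdz h₁ h₂ =>
    .assoc_ijk hij hjk hx hy hz hdx hdy hdz h₁ h₂
  | _, _, .assoc_ikj hij hjk hx hy hz hdx hdy hdz h₁ h₂ =>
    .assoc_ikj hij hjk hx hy hz hdx hdy hdz h₁ h₂
  | _, _, .assoc_jki hij hjk hx hy hz hdx hdy hdz h₁ h₂ =>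
    .assoc_jki hij hjk hx hy hz hdx hdy hdz h₁ h₂
  | _, _, .assoc_kji hij hjk hx hy hz hdx hdy hdz h₁ h₂ =>
    .assoc_kji hij hjk hx hy hz hdx hdy hdz h₁ h₂

theorem Rel.of_unit {a b : PTree P.cells} (h : Rel P (.unit i a) (.unit i b)) (ha : Compat P a) :
    Rel P a b := by
  have := h.idBaseRel
  rw [IdBaseRel, idBase_unit, idBase_unit, Option.rel_some_some] at this
  exact Rel.of_reflGen this ha

theorem rel_of_rel_graftUnits {t t' : PTree P.cells} {a : ℕ} :
    ∀ {b : ℕ}, Compat P (graftUnits t a b) → Rel P (graftUnits t a b) (graftUnits t' a b) →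
      Rel P t t'
  | 0, _, h => h
  | b + 1, hc, h => by
    by_cases hab : a ≤ b
    · rw [graftUnits_succ _ hab, graftUnits_succ _ hab] at h
      rw [graftUnits_succ _ hab] at hc
      exact rel_of_rel_graftUnits hc.of_unit.1 (h.of_unit hc.of_unit.1)
    · rwa [graftUnits_of_le _ (by omega), graftUnits_of_le _ (by omega)] at h

end Sesq

namespace Sesq

/-- Decomposition of normal forms: `≗`-equivalent `k`-dimensional
normal forms `x, x̃` with common cell dimension `cd` decompose as unit chains
`x = (x₀ → u_{cd+1} → ⋯ → u_k)`, `x̃ = (x̃₀ → u_{cd+1} → ⋯ → u_k)` with `x₀, x̃₀`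
unit-free normal forms satisfying `x₀ ≗ x̃₀`. -/
theorem normalForm_unit_decomposition {n : ℕ} (C : Computad n) (k cd : ℕ)
    (x x' : PTree C.cells)
    (hx : Compat C.toPrecomputad x) (hx' : Compat C.toPrecomputad x')
    (hnx : NF x) (hnx' : NF x') (h : Rel C.toPrecomputad x x')
    (hk : PTree.dimT C.dim x = k) (hk' : PTree.dimT C.dim x' = k)
    (hcd : PTree.cdim C.dim x = cd) (hcd' : PTree.cdim C.dim x' = cd) :
    ∃ x₀ x₀' : PTree C.cells,
      x = PTree.graftUnits x₀ cd k ∧ x' = PTree.graftUnits x₀' cd k ∧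
      NF x₀ ∧ NF x₀' ∧ PTree.UnitFree x₀ ∧ PTree.UnitFree x₀' ∧
      Rel C.toPrecomputad x₀ x₀' := by
  obtain ⟨x₀, hx₀, hn₀, hu₀⟩ := hnx.exists_graftUnits hx
  obtain ⟨x₀', hx₀', hn₀', hu₀'⟩ := hnx'.exists_graftUnits hx'
  rw [hk, hcd] at hx₀
  rw [hk', hcd'] at hx₀'
  subst hx₀ hx₀'
  exact ⟨x₀, x₀', rfl, rfl, hn₀, hn₀', hu₀, hu₀', rel_of_rel_graftUnits hx h⟩

end Sesq
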